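/- Let P be a singular X–Y linkage in a graph G, let x ∈ X lie on a nontrivial path P(x) ∈ P with second vertex x', and suppose x has no neighbour in G other than x'. Then P with P(x) replaced by P(x) − x is a singular (X \ {x} ∪ {x'})–Y linkage in G − x. -/

import Mathlib

/-- A path in a simple graph `G`, bundled with its endpoints. -/
structure PathIn (V : Type) (G : SimpleGraph V) where
  a : V
  b : V
  walk : G.Walk a b
  isPath : walk.IsPath

/-- `P` is an `X`–`Y` linkage in `G − S` (paths avoiding the deleted set `S`). -/
def IsLinkageAvoiding {V : Type} (G : SimpleGraph V) (S : Set V) (X Y : Set V)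
    (P : Set (PathIn V G)) : Prop :=
  P.Finite ∧ P.ncard = X.ncard ∧ X.ncard = Y.ncard ∧
  (∀ p ∈ P, p.a ∈ X ∧ p.b ∈ Y) ∧
  (∀ p ∈ P, ∀ v ∈ p.walk.support, v ∉ S) ∧
  (∀ p ∈ P, ∀ q ∈ P, p ≠ q → ∀ v, v ∈ p.walk.support → v ∉ q.walk.support)

/-- `P` is a singular `X`–`Y` linkage in `G − S`: its paths cover all vertices outside `S`
and it is the unique `X`–`Y` linkage in `G − S`. -/
def IsSingularLinkageAvoiding {V : Type} (G : SimpleGraph V) (S : Set V) (X Y : Set V)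
    (P : Set (PathIn V G)) : Prop :=
  IsLinkageAvoiding G S X Y P ∧ (∀ v : V, v ∉ S → ∃ p ∈ P, v ∈ p.walk.support) ∧
  ∀ Q : Set (PathIn V G), IsLinkageAvoiding G S X Y Q → Q = P

/-!
Removing the first vertex `x` of `p` leaves `P` a linkage from `X - x + x'` to `Y` in `G - x`,
still covering every vertex but `x`. Conversely, every such linkage of `G - x` becomes an
`X`–`Y` linkage of `G` by prepending the edge `x x'` to its path starting at `x'`; by singularity
of `P` that linkage is `P` itself, so the linkage of `G - x` was `P` with `p` replaced by `p - x`.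
-/

open SimpleGraph

namespace PathIn

variable {V : Type} {G : SimpleGraph V}

def cons (q : PathIn V G) {x : V} (h : G.Adj x q.a) (hx : x ∉ q.walk.support) : PathIn V G :=
  ⟨x, q.b, .cons h q.walk, (Walk.cons_isPath_iff h q.walk).2 ⟨q.isPath, hx⟩⟩

variable {q r : PathIn V G} {x : V} {h : G.Adj x q.a} {hx : x ∉ q.walk.support}

@[simp]
lemma support_cons : (q.cons h hx).walk.support = x :: q.walk.support := rfl

lemma mem_support_cons {v : V} :
    v ∈ (q.cons h hx).walk.support ↔ v = x ∨ v ∈ q.walk.support :=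
  List.mem_cons

lemma eq_of_cons_eq_cons {h' : G.Adj x r.a} {hx' : x ∉ r.walk.support}
    (he : q.cons h hx = r.cons h' hx') : q = r := by
  obtain ⟨qa, qb, qw, hqw⟩ := q
  obtain ⟨ra, rb, rw, hrw⟩ := r
  simp only [cons, mk.injEq, true_and] at he
  obtain ⟨rfl, he⟩ := he
  simp only [heq_eq_eq, Walk.cons.injEq] at he
  obtain ⟨rfl, he⟩ := he
  simp only [heq_eq_eq] at he
  subst he
  rfl

end PathIn

def PathsDisjoint {V : Type} {G : SimpleGraph V} (P : Set (PathIn V G)) : Prop :=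
  ∀ p ∈ P, ∀ q ∈ P, p ≠ q → ∀ v, v ∈ p.walk.support → v ∉ q.walk.support

lemma PathsDisjoint.insert_diff {V : Type} {G : SimpleGraph V} {P : Set (PathIn V G)}
    {p q : PathIn V G} (hP : PathsDisjoint P)
    (hq : ∀ s ∈ P, s ≠ p → ∀ v ∈ q.walk.support, v ∉ s.walk.support) :
    PathsDisjoint (insert q (P \ {p})) := by
  rintro r (rfl | ⟨hr, hrp⟩) s (rfl | ⟨hs, hsp⟩) hne v hvr hvs
  · exact hne rfl
  · exact hq s hs hsp v hvr hvs
  · exact hq r hr hrp v hvs hvr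
  · exact hP r hr s hs hne v hvr hvs

namespace IsLinkageAvoiding

variable {V : Type} {G : SimpleGraph V} {S X Y : Set V} {P : Set (PathIn V G)}

lemma a_mem (hP : IsLinkageAvoiding G S X Y P) {p : PathIn V G} (hp : p ∈ P) : p.a ∈ X :=
  (hP.2.2.2.1 p hp).1

lemma notMem_of_mem_support (hP : IsLinkageAvoiding G S X Y P) {p : PathIn V G} (hp : p ∈ P)
    {v : V} (hv : v ∈ p.walk.support) : v ∉ S :=
  hP.2.2.2.2.1 p hp v hv

lemma pathsDisjoint (hP : IsLinkageAvoiding G S X Y P) : PathsDisjoint P :=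
  hP.2.2.2.2.2

lemma injOn_a (hP : IsLinkageAvoiding G S X Y P) : Set.InjOn PathIn.a P := by
  intro r hr s hs hrs
  by_contra hne
  exact hP.pathsDisjoint r hr s hs hne r.a r.walk.start_mem_support
    (by rw [hrs]; exact s.walk.start_mem_support)

lemma finite_left (hP : IsLinkageAvoiding G S X Y P) (hne : P.Nonempty) : X.Finite :=
  Set.finite_of_ncard_ne_zero (hP.2.1 ▸ (hne.ncard_pos hP.1).ne' : X.ncard ≠ 0)

lemma image_a (hP : IsLinkageAvoiding G S X Y P) (hX : X.Finite) : PathIn.a '' P = X := by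
  refine Set.eq_of_subset_of_ncard_le ?_ ?_ hX
  · rintro _ ⟨r, hr, rfl⟩
    exact hP.a_mem hr
  · rw [hP.injOn_a.ncard_image, hP.2.1]

variable {q : PathIn V G} {x : V} {h : G.Adj x q.a} {hx : x ∉ q.walk.support}

lemma a_notMem_of_cons_mem (hP : IsLinkageAvoiding G S X Y P) (hp : q.cons h hx ∈ P) :
    q.a ∉ X := by
  intro hqX
  rw [← hP.image_a (hP.finite_left ⟨_, hp⟩)] at hqX
  obtain ⟨r, hr, hra⟩ := hqX
  have hrp : r ≠ q.cons h hx := by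
    rintro rfl
    exact hx (by rw [show x = q.a from hra]; exact q.walk.start_mem_support)
  exact hP.pathsDisjoint _ hp r hr hrp.symm q.a (by simp) (hra ▸ r.walk.start_mem_support)

theorem replace_cons_by_tail (hP : IsLinkageAvoiding G S X Y P) (hp : q.cons h hx ∈ P) :
    IsLinkageAvoiding G (insert x S) (X \ {x} ∪ {q.a}) Y (insert q (P \ {q.cons h hx})) := by
  obtain ⟨hfin, hPX, hXY, hends, havoid, hdisj⟩ := id hP
  have hxX : x ∈ X := (hends _ hp).1
  have hqX : q.a ∉ X := hP.a_notMem_of_cons_mem hp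
  have hqP : q ∉ P := fun hq ↦ hqX (hends q hq).1
  have hcard : (X \ {x} ∪ {q.a}).ncard = X.ncard := by
    rw [Set.union_singleton, Set.ncard_exchange hqX hxX]
  have hxP : ∀ r ∈ P, r ≠ q.cons h hx → x ∉ r.walk.support := fun r hr hrp ↦
    hdisj _ hp r hr hrp.symm x (by simp)
  refine ⟨hfin.sdiff.insert q, ?_, hcard ▸ hXY, ?_, ?_, ?_⟩
  · rw [Set.ncard_exchange hqP hp, hPX, hcard]
  · rintro r (rfl | ⟨hr, hrp⟩)
    · exact ⟨Or.inr rfl, (hends _ hp).2⟩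
    · refine ⟨Or.inl ⟨(hends r hr).1, ?_⟩, (hends r hr).2⟩
      exact fun hrx ↦ hrp (hP.injOn_a hr hp hrx)
  · rintro r (rfl | ⟨hr, hrp⟩) v hv (rfl | hvS)
    · exact hx hv
    · exact havoid _ hp v (by simp [hv]) hvS
    · exact hxP r hr hrp hv
    · exact havoid r hr v hv hvS
  · exact PathsDisjoint.insert_diff hdisj fun s hs hsp v hv ↦
      hdisj _ hp s hs (Ne.symm hsp) v (by simp [hv])

theorem replace_by_cons {Q : Set (PathIn V G)} {r : PathIn V G}
    (hQ : IsLinkageAvoiding G (insert x S) (X \ {x} ∪ {r.a}) Y Q) (hr : r ∈ Q)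
    (hxX : x ∈ X) (hrX : r.a ∉ X) (hxS : x ∉ S) (h : G.Adj x r.a)
    (hx : x ∉ r.walk.support) :
    IsLinkageAvoiding G S X Y (insert (r.cons h hx) (Q \ {r})) := by
  obtain ⟨hfin, hQX, hXY, hends, havoid, hdisj⟩ := id hQ
  have hcard : (X \ {x} ∪ {r.a}).ncard = X.ncard := by
    rw [Set.union_singleton, Set.ncard_exchange hrX hxX]
  have hxQ : ∀ s ∈ Q, x ∉ s.walk.support := fun s hs hxs ↦ havoid s hs x hxs (Or.inl rfl)
  have hrQ : r.cons h hx ∉ Q := fun hrQ ↦ hxQ _ hrQ (by simp)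
  refine ⟨hfin.sdiff.insert _, ?_, hcard ▸ hXY, ?_, ?_, ?_⟩
  · rw [Set.ncard_exchange hrQ hr, hQX, hcard]
  · rintro s (rfl | ⟨hs, hsr⟩)
    · exact ⟨hxX, (hends r hr).2⟩
    · refine ⟨?_, (hends s hs).2⟩
      rcases (hends s hs).1 with ⟨hsX, -⟩ | hsa
      · exact hsX
      · exact absurd (hQ.injOn_a hs hr hsa) hsr
  · rintro s (rfl | ⟨hs, -⟩) v hv hvS
    · rcases (PathIn.support_cons ▸ hv : v ∈ x :: r.walk.support) with _ | ⟨_, hv⟩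
      · exact hxS hvS
      · exact havoid r hr v hv (Or.inr hvS)
    · exact havoid s hs v hv (Or.inr hvS)
  · refine PathsDisjoint.insert_diff hdisj fun s hs hsr v hv ↦ ?_
    rcases PathIn.mem_support_cons.1 hv with rfl | hv
    · exact hxQ s hs
    · exact hdisj r hr s hs (Ne.symm hsr) v hv

end IsLinkageAvoiding

theorem IsSingularLinkageAvoiding.replace_cons_by_tail {V : Type} {G : SimpleGraph V}
    {S X Y : Set V} {P : Set (PathIn V G)} {q : PathIn V G} {x : V} {h : G.Adj x q.a}
    {hx : x ∉ q.walk.support} (hP : IsSingularLinkageAvoiding G S X Y P)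
    (hp : q.cons h hx ∈ P) :
    IsSingularLinkageAvoiding G (insert x S) (X \ {x} ∪ {q.a}) Y
      (insert q (P \ {q.cons h hx})) := by
  obtain ⟨hlink, hcover, huniq⟩ := hP
  refine ⟨hlink.replace_cons_by_tail hp, fun v hv ↦ ?_, fun Q hQ ↦ ?_⟩
  · obtain ⟨r, hr, hvr⟩ := hcover v fun hvS ↦ hv (Or.inr hvS)
    rcases eq_or_ne r (q.cons h hx) with rfl | hrp
    · rcases PathIn.mem_support_cons.1 hvr with rfl | hvq
      · exact absurd (Or.inl rfl) hv
      · exact ⟨q, Or.inl rfl, hvq⟩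
    · exact ⟨r, Or.inr ⟨hr, hrp⟩, hvr⟩
  · have hxX : x ∈ X := hlink.a_mem hp
    have hxS : x ∉ S := hlink.notMem_of_mem_support hp (by simp)
    have hqX : q.a ∉ X := hlink.a_notMem_of_cons_mem hp
    have hX' : (X \ {x} ∪ {q.a}).Finite :=
      ((hlink.finite_left ⟨_, hp⟩).sdiff).union (Set.finite_singleton _)
    obtain ⟨r, hr, hra⟩ : q.a ∈ PathIn.a '' Q := hQ.image_a hX' ▸ Or.inr rfl
    have hxr : x ∉ r.walk.support := fun hxr ↦ hQ.notMem_of_mem_support hr hxr (Or.inl rfl)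
    have hr' : G.Adj x r.a := hra ▸ h
    have hrQ : r.cons hr' hxr ∉ Q := fun hrQ ↦
      hQ.notMem_of_mem_support hrQ (by simp) (Or.inl rfl)
    have hQP : insert (r.cons hr' hxr) (Q \ {r}) = P :=
      huniq _ ((hra ▸ hQ).replace_by_cons hr hxX (hra ▸ hqX) hxS hr' hxr)
    obtain rfl : q = r := by
      rcases hQP ▸ hp with hpr | ⟨hpQ, -⟩
      · exact PathIn.eq_of_cons_eq_cons hpr
      · exact absurd (Or.inl rfl) (hQ.notMem_of_mem_support hpQ (by simp))
    rw [← hQP, Set.insert_sdiff_self_of_notMem fun hrQ' ↦ hrQ hrQ'.1,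
      Set.insert_sdiff_singleton, Set.insert_eq_of_mem hr]

theorem stmt_13_general {V : Type} (G : SimpleGraph V) (X Y : Set V)
    (P : Set (PathIn V G)) (hP : IsSingularLinkageAvoiding G (∅ : Set V) X Y P)
    (p : PathIn V G) (hp : p ∈ P)
    (x' : V) (hx' : p.walk.support.tail.head? = some x') :
    ∃ q : PathIn V G, q.a = x' ∧ q.b = p.b ∧
      q.walk.support = p.walk.support.tail ∧
      IsSingularLinkageAvoiding G ({p.a} : Set V) ((X \ {p.a}) ∪ {x'}) Y
        (insert q (P \ {p})) := by
  obtain ⟨x, b, _ | ⟨h, w⟩, hw⟩ := p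
  · simp at hx'
  · set q : PathIn V G := ⟨_, b, w, hw.of_cons⟩
    have hx : x ∉ q.walk.support := ((Walk.cons_isPath_iff h w).1 hw).2
    obtain rfl : q.a = x' := by
      change w.support.head? = some x' at hx'
      rwa [← w.cons_tail_support, List.head?_cons, Option.some_inj] at hx'
    refine ⟨q, rfl, rfl, rfl, ?_⟩
    have hq := hP.replace_cons_by_tail (q := q) (hx := hx) hp
    rwa [LawfulSingleton.insert_empty_eq] at hq

/-- Let `P` be a singular `X`–`Y` linkage in `G`, let `x = p.a ∈ X` lie on a
nontrivial path `p ∈ P` with second vertex `x'`, and suppose `x` has no neighbour other than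
`x'`.  Then `P` with `p` replaced by `p − x` is a singular `(X \ {x}) ∪ {x'}`–`Y` linkage in
`G − x`. -/
theorem stmt_13 {V : Type} [Fintype V] [DecidableEq V] (G : SimpleGraph V) (X Y : Set V)
    (P : Set (PathIn V G)) (hP : IsSingularLinkageAvoiding G (∅ : Set V) X Y P)
    (p : PathIn V G) (hp : p ∈ P) (hxX : p.a ∈ X)
    (hnontriv : ¬ p.walk.Nil)
    (x' : V) (hx' : p.walk.support.tail.head? = some x')
    (hdeg : ∀ y : V, G.Adj p.a y → y = x') :
    ∃ q : PathIn V G, q.a = x' ∧ q.b = p.b ∧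
      q.walk.support = p.walk.support.tail ∧
      IsSingularLinkageAvoiding G ({p.a} : Set V) ((X \ {p.a}) ∪ {x'}) Y
        (insert q (P \ {p})) :=
  stmt_13_general G X Y P hP p hp x' hx'
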